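/- arXiv:2011.09276 — 2 statements merged into one kernel-verified Lean document; each statement's English description precedes it below -/
import Mathlib

section
/- Let X be a group and A, B subgroups of X such that X is generated by A ∪ B and A ∩ B = {1}. Then the line graph of the coset graph Γ_X(A,B) is isomorphic, as a simple graph, to the Cayley graph of X with respect to the generating set (A ∪ B) ∖ {1}. -/
/-! The edge of Γ_X(A,B) through the cosets gA and gB is labelled by g. Every edge is of this
form, and g is determined by its edge up to right multiplication by A ∩ B = 1, so the edges
are in bijection with X. Two such edges, labelled g and h, share the vertex gA = hA exactly
when g⁻¹h ∈ A, and the vertex gB = hB exactly when g⁻¹h ∈ B. -/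

/-- The coset graph Γ_X(A,B): vertices are (X/A) ⊔ (X/B); a coset xA is adjacent to a
coset yB iff they intersect, i.e. iff there is g ∈ X with gA = xA and gB = yB. -/
def cosetGraph {X : Type*} [Group X] (A B : Subgroup X) :
    SimpleGraph ((X ⧸ A) ⊕ (X ⧸ B)) where
  Adj v w :=
    match v, w with
    | Sum.inl x, Sum.inr y =>
        ∃ g : X, (QuotientGroup.mk g : X ⧸ A) = x ∧ (QuotientGroup.mk g : X ⧸ B) = y
    | Sum.inr y, Sum.inl x =>
        ∃ g : X, (QuotientGroup.mk g : X ⧸ A) = x ∧ (QuotientGroup.mk g : X ⧸ B) = y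
    | _, _ => False
  symm := by constructor; rintro (x | x) (y | y) h <;> first | exact h.elim | exact h
  loopless := by constructor; rintro (x | x) h <;> exact h

/-- The Cayley graph of X with respect to the symmetric generating set (A ∪ B) \ {1}:
x is adjacent to y iff x⁻¹y ∈ (A ∪ B) \ {1}. -/
def cayleyGraph {X : Type*} [Group X] (A B : Subgroup X) : SimpleGraph X where
  Adj x y := x⁻¹ * y ∈ ((A : Set X) ∪ (B : Set X)) \ {1}
  symm := by
    constructor
    rintro x y ⟨hmem, hne⟩
    have h : y⁻¹ * x = (x⁻¹ * y)⁻¹ := by group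
    constructor
    · rw [h]
      rcases hmem with hA | hA
      · exact Or.inl (A.inv_mem hA)
      · exact Or.inr (B.inv_mem hA)
    · intro hc
      apply hne
      have hc' : y⁻¹ * x = 1 := hc
      rw [h] at hc'
      simpa using inv_eq_one.mp hc'
  loopless := by
    constructor
    intro x h
    exact h.2 (by simp)

/-- The line graph of a simple graph G: vertices are the edges of G, two distinct edges
being adjacent iff they share a vertex. -/
def lineGraph {V : Type*} (G : SimpleGraph V) : SimpleGraph G.edgeSet where
  Adj e f := e ≠ f ∧ ∃ v : V, v ∈ (e : Sym2 V) ∧ v ∈ (f : Sym2 V)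
  symm := by
    constructor
    rintro e f ⟨hne, v, hv1, hv2⟩
    exact ⟨hne.symm, v, hv2, hv1⟩
  loopless := by constructor; rintro e ⟨hne, -⟩; exact hne rfl

namespace cosetGraph

variable {X : Type*} [Group X] {A B : Subgroup X}

def edgeOf (A B : Subgroup X) (g : X) : (cosetGraph A B).edgeSet :=
  ⟨s(Sum.inl (g : X ⧸ A), Sum.inr (g : X ⧸ B)), (SimpleGraph.mem_edgeSet _).mpr ⟨g, rfl, rfl⟩⟩

theorem edgeOf_surjective : Function.Surjective (edgeOf A B) := by
  rintro ⟨e, he⟩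
  induction e with
  | h v w =>
    rcases v with _ | _ <;> rcases w with _ | _
    · exact he.elim
    · obtain ⟨g, rfl, rfl⟩ := he
      exact ⟨g, rfl⟩
    · obtain ⟨g, rfl, rfl⟩ := he
      exact ⟨g, Subtype.ext Sym2.eq_swap⟩
    · exact he.elim

theorem edgeOf_injective (hAB : A ⊓ B = ⊥) : Function.Injective (edgeOf A B) := by
  intro g h hgh
  rcases Sym2.eq_iff.mp (congrArg Subtype.val hgh) with ⟨hA, hB⟩ | ⟨hinl, -⟩
  · have hmem : g⁻¹ * h ∈ A ⊓ B :=
      ⟨QuotientGroup.eq.mp (Sum.inl_injective hA), QuotientGroup.eq.mp (Sum.inr_injective hB)⟩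
    rw [hAB, Subgroup.mem_bot] at hmem
    exact inv_mul_eq_one.mp hmem
  · exact (Sum.inl_ne_inr hinl).elim

theorem exists_mem_edgeOf_iff (g h : X) :
    (∃ v, v ∈ (edgeOf A B g).1 ∧ v ∈ (edgeOf A B h).1) ↔
      g⁻¹ * h ∈ A ∨ g⁻¹ * h ∈ B := by
  simp only [edgeOf, Sym2.mem_iff, ← QuotientGroup.eq]
  constructor
  · rintro ⟨v, rfl | rfl, hv | hv⟩
    · exact Or.inl (Sum.inl_injective hv)
    · exact (Sum.inl_ne_inr hv).elim
    · exact (Sum.inr_ne_inl hv).elim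
    · exact Or.inr (Sum.inr_injective hv)
  · rintro (hA | hB)
    · exact ⟨_, Or.inl rfl, Or.inl (congrArg Sum.inl hA)⟩
    · exact ⟨_, Or.inr rfl, Or.inr (congrArg Sum.inr hB)⟩

theorem lineGraph_adj_edgeOf_iff (hAB : A ⊓ B = ⊥) (g h : X) :
    (lineGraph (cosetGraph A B)).Adj (edgeOf A B g) (edgeOf A B h) ↔
      (cayleyGraph A B).Adj g h := by
  have hne : edgeOf A B g ≠ edgeOf A B h ↔ g⁻¹ * h ≠ 1 :=
    ((edgeOf_injective hAB).ne_iff).trans (not_congr inv_mul_eq_one).symm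
  simp only [lineGraph, cayleyGraph, hne, exists_mem_edgeOf_iff, Set.mem_sdiff,
    Set.mem_union, SetLike.mem_coe, Set.mem_singleton_iff]
  exact and_comm

end cosetGraph

theorem lineGraph_cosetGraph_iso_cayleyGraph_general
    {X : Type*} [Group X] (A B : Subgroup X)
    (hAB : A ⊓ B = ⊥) :
    Nonempty (lineGraph (cosetGraph A B) ≃g cayleyGraph A B) := by
  let edgeEquiv : X ≃ (cosetGraph A B).edgeSet := Equiv.ofBijective (cosetGraph.edgeOf A B)
    ⟨cosetGraph.edgeOf_injective hAB, cosetGraph.edgeOf_surjective⟩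
  exact ⟨RelIso.symm ⟨edgeEquiv, cosetGraph.lineGraph_adj_edgeOf_iff hAB _ _⟩⟩

/-- If X is generated by subgroups A and B with A ∩ B = {1}, then the line graph of the
coset graph Γ_X(A,B) is isomorphic to the Cayley graph of X with respect to (A ∪ B)\{1}. -/
theorem lineGraph_cosetGraph_iso_cayleyGraph
    {X : Type*} [Group X] (A B : Subgroup X)
    (hgen : Subgroup.closure ((A : Set X) ∪ (B : Set X)) = ⊤)
    (hAB : A ⊓ B = ⊥) :
    Nonempty (lineGraph (cosetGraph A B) ≃g cayleyGraph A B) :=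
  lineGraph_cosetGraph_iso_cayleyGraph_general A B hAB
end

section
/- Let p be an odd prime and let G = 𝒢_{Ã₂}(p). Denoting again by a, b, c the images in G of the generators, set x = a·b·a^((p−1)/2)·c and y = a·c·a^((p−1)/2)·b. Then the subgroup of G generated by x and y is isomorphic to ℤ × ℤ. -/
/-- The commutator [x,y] = x⁻¹y⁻¹xy (the convention used in the paper). -/
def pc {G : Type*} [Group G] (x y : G) : G := x⁻¹ * y⁻¹ * x * y

/-- The relators of the Kac–Moody–Steinberg group 𝒢_{Ã₂}(p):
a^p, b^p, c^p, [a,b,a], [a,b,b], [b,c,b], [b,c,c], [a,c,a], [a,c,c]. -/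
def kmsA2Rels (p : ℕ) : Set (FreeGroup (Fin 3)) :=
  let a : FreeGroup (Fin 3) := FreeGroup.of 0
  let b : FreeGroup (Fin 3) := FreeGroup.of 1
  let c : FreeGroup (Fin 3) := FreeGroup.of 2
  {a ^ p, b ^ p, c ^ p,
   pc (pc a b) a, pc (pc a b) b,
   pc (pc b c) b, pc (pc b c) c,
   pc (pc a c) a, pc (pc a c) c}

/-- The Kac–Moody–Steinberg group 𝒢_{Ã₂}(p). -/
abbrev KMSA2 (p : ℕ) : Type := PresentedGroup (kmsA2Rels p)


lemma map_pc {G H : Type*} [Group G] [Group H] (φ : G →* H) (g h : G) :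
    φ (pc g h) = pc (φ g) (φ h) := by simp [pc]



section CommLemma
variable {H : Type*} [Group H]

lemma pc_eq_one_of_comm {g h : H} (hc : g * h = h * g) : pc g h = 1 := by
  rw [pc, mul_assoc, hc]; group

lemma comm_of_pc_eq_one {g h : H} (hc : pc g h = 1) : Commute g h := by
  unfold pc at hc
  have h2 := congrArg (fun z => h * g * z) hc
  simp only [mul_one] at h2
  unfold Commute SemiconjBy
  calc g * h = h * g * (g⁻¹ * h⁻¹ * g * h) := by group
    _ = h * g := h2

lemma pc_inv (g h : H) : (pc g h)⁻¹ = pc h g := by rw [pc, pc]; group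

-- swap: g * h = h * g * pc g h
lemma swap (g h : H) : g * h = h * g * pc g h := by rw [pc]; group

-- if w := pc g h commutes with h, then g * h^j = h^j * g * w^j
lemma swap_pow {g h : H} (hwh : Commute (pc g h) h) (j : ℕ) :
    g * h ^ j = h ^ j * g * (pc g h) ^ j := by
  induction j with
  | zero => simp
  | succ n ih =>
    have h1 : g * h ^ (n+1) = (g * h ^ n) * h := by rw [mul_assoc, ← pow_succ]
    rw [h1, ih, pow_succ, pow_succ]
    have h2 : (pc g h) ^ n * h = h * (pc g h) ^ n := (hwh.pow_left n).eq
    calc h ^ n * g * pc g h ^ n * h = h ^ n * g * (pc g h ^ n * h) := by group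
      _ = h ^ n * g * (h * pc g h ^ n) := by rw [h2]
      _ = h ^ n * (g * h) * pc g h ^ n := by group
      _ = h ^ n * (h * g * pc g h) * pc g h ^ n := by rw [← swap]
      _ = h ^ n * h * g * (pc g h * pc g h ^ n) := by group
      _ = h ^ n * h * g * (pc g h ^ n * pc g h) := by rw [(Commute.refl (pc g h)).pow_right n]
      _ = h ^ n * h * (g * pc g h ^ n * pc g h) := by group
      _ = _ := by group

lemma pc_torsion {g h : H} (p : ℕ) (hwh : Commute (pc g h) h) (hh : h ^ p = 1) :
    (pc g h) ^ p = 1 := by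
  have h1 := swap_pow hwh p
  rw [hh, mul_one, one_mul] at h1
  -- h1 : g = g * pc g h ^ p
  have h2 : g * 1 = g * pc g h ^ p := by rw [mul_one]; exact h1
  exact (mul_left_cancel h2).symm

lemma bracket {g h : H} (p k : ℕ) (hpk : p = 2 * k + 1) (hg : g ^ p = 1) (hh : h ^ p = 1)
    (c1 : pc (pc g h) g = 1) (c2 : pc (pc g h) h = 1) :
    g ^ k * h * g * h * g ^ k = h ^ 2 := by
  set w := pc g h with hw
  have hwg : Commute w g := comm_of_pc_eq_one c1
  have hwh : Commute w h := comm_of_pc_eq_one c2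
  have hwp : w ^ p = 1 := pc_torsion p hwh hh
  set W := w⁻¹ with hW
  have hWg : Commute W g := hwg.inv_left
  have hWh : Commute W h := hwh.inv_left
  have hpc_hg : pc h g = W := by rw [hW, pc_inv]
  have key1 : h * g = g * h * W := by rw [← hpc_hg]; exact swap h g
  have key2 : h * g ^ k = g ^ k * h * W ^ k := by
    have := swap_pow (g := h) (h := g) (by rw [hpc_hg]; exact hWg) k
    rwa [hpc_hg] at this
  have hWW : W ^ (2 * k + 1) = 1 := by
    rw [← hpk, hW, inv_pow, hwp, inv_one]
  calc g ^ k * h * g * h * g ^ k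
      = g ^ k * (h * g) * h * g ^ k := by group
    _ = g ^ k * (g * h * W) * h * g ^ k := by rw [key1]
    _ = g ^ (k+1) * h * (W * h) * g ^ k := by rw [pow_succ]; group
    _ = g ^ (k+1) * h * (h * W) * g ^ k := by rw [hWh.eq]
    _ = g ^ (k+1) * h ^ 2 * (W * g ^ k) := by rw [pow_two]; group
    _ = g ^ (k+1) * h ^ 2 * (g ^ k * W) := by rw [(hWg.pow_right k).eq]
    _ = g ^ (k+1) * (h * (h * g ^ k)) * W := by rw [pow_two]; group
    _ = g ^ (k+1) * (h * (g ^ k * h * W ^ k)) * W := by rw [key2]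
    _ = g ^ (k+1) * ((h * g ^ k) * h * W ^ k) * W := by group
    _ = g ^ (k+1) * ((g ^ k * h * W ^ k) * h * W ^ k) * W := by rw [key2]
    _ = g ^ (k+1) * (g ^ k * h * (W ^ k * h) * W ^ k) * W := by group
    _ = g ^ (k+1) * (g ^ k * h * (h * W ^ k) * W ^ k) * W := by rw [(hWh.pow_left k).eq]
    _ = (g ^ (k+1) * g ^ k) * h ^ 2 * (W ^ k * W ^ k * W) := by rw [pow_two]; group
    _ = g ^ (2*k+1) * h ^ 2 * W ^ (2*k+1) := by
        have e1 : k + 1 + k = 2 * k + 1 := by omega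
        have e2 : k + k + 1 = 2 * k + 1 := by omega
        rw [← pow_add, ← pow_add, ← pow_succ, e1, e2]
    _ = h ^ 2 := by rw [hWW, ← hpk, hg, one_mul, mul_one]

lemma xy_comm {a b c : H} (p k : ℕ) (hpk : p = 2 * k + 1)
    (ha : a ^ p = 1) (hb : b ^ p = 1) (hc : c ^ p = 1)
    (rab_a : pc (pc a b) a = 1) (rab_b : pc (pc a b) b = 1)
    (rbc_b : pc (pc b c) b = 1) (rbc_c : pc (pc b c) c = 1)
    (rac_a : pc (pc a c) a = 1) (rac_c : pc (pc a c) c = 1) :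
    (a * b * a ^ k * c) * (a * c * a ^ k * b) = (a * c * a ^ k * b) * (a * b * a ^ k * c) := by
  have h1 : a ^ k * c * a * c * a ^ k = c ^ 2 := bracket p k hpk ha hc rac_a rac_c
  have h2 : a ^ k * b * a * b * a ^ k = b ^ 2 := bracket p k hpk ha hb rab_a rab_b
  have hv : Commute (pc b c) b := comm_of_pc_eq_one rbc_b
  have hv' : Commute (pc b c) c := comm_of_pc_eq_one rbc_c
  set v := pc b c with hvdef
  have hcb : c * b = b * c * v⁻¹ := by
    have := swap c b; rw [← pc_inv] at this; exact this
  have h3 : b * c ^ 2 * b = c * b ^ 2 * c := by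
    have hVb : Commute v⁻¹ b := hv.inv_left
    have hVc : Commute v⁻¹ c := hv'.inv_left
    calc b * c ^ 2 * b = (b * c) * (c * b) := by rw [pow_two]; group
      _ = (b * c) * (b * c * v⁻¹) := by rw [hcb]
      _ = (b * c) * (b * c) * v⁻¹ := by group
      _ = (b * c * v⁻¹) * (v * (b * c)) * v⁻¹ := by group
      _ = (c * b) * (v * b * c) * v⁻¹ := by rw [← hcb]; group
      _ = (c * b) * (b * v * c) * v⁻¹ := by rw [hv.eq]
      _ = (c * b) * (b * (v * c)) * v⁻¹ := by group
      _ = (c * b) * (b * (c * v)) * v⁻¹ := by rw [hv'.eq]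
      _ = c * b ^ 2 * c := by rw [pow_two]; group
  calc (a * b * a ^ k * c) * (a * c * a ^ k * b)
      = a * b * (a ^ k * c * a * c * a ^ k) * b := by group
    _ = a * (b * c ^ 2 * b) := by rw [h1]; group
    _ = a * (c * b ^ 2 * c) := by rw [h3]
    _ = a * c * (a ^ k * b * a * b * a ^ k) * c := by rw [h2]; group
    _ = (a * c * a ^ k * b) * (a * b * a ^ k * c) := by group

end CommLemma


section Rep
variable {F : Type*} [Field F]

open Matrix

def e12 (r : F) : Matrix (Fin 3) (Fin 3) F := !![1,r,0; 0,1,0; 0,0,1]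
def e23 (r : F) : Matrix (Fin 3) (Fin 3) F := !![1,0,0; 0,1,r; 0,0,1]
def e31 (r : F) : Matrix (Fin 3) (Fin 3) F := !![1,0,0; 0,1,0; r,0,1]
def e13 (r : F) : Matrix (Fin 3) (Fin 3) F := !![1,0,r; 0,1,0; 0,0,1]
def e21 (r : F) : Matrix (Fin 3) (Fin 3) F := !![1,0,0; r,1,0; 0,0,1]
def e32 (r : F) : Matrix (Fin 3) (Fin 3) F := !![1,0,0; 0,1,0; 0,r,1]

set_option linter.unnecessarySeqFocus false

lemma e12_mul (r r' : F) : e12 r * e12 r' = e12 (r + r') := by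
  ext i j; fin_cases i <;> fin_cases j <;>
    simp [e12, Matrix.mul_apply, Fin.sum_univ_three, Matrix.vecHead, Matrix.vecTail] <;> ring

lemma e23_mul (r r' : F) : e23 r * e23 r' = e23 (r + r') := by
  ext i j; fin_cases i <;> fin_cases j <;>
    simp [e23, Matrix.mul_apply, Fin.sum_univ_three, Matrix.vecHead, Matrix.vecTail] <;> ring

lemma e31_mul (r r' : F) : e31 r * e31 r' = e31 (r + r') := by
  ext i j; fin_cases i <;> fin_cases j <;>
    simp [e31, Matrix.mul_apply, Fin.sum_univ_three, Matrix.vecHead, Matrix.vecTail] <;> ring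

lemma e12_zero : (e12 (0:F)) = 1 := by simp [e12, Matrix.one_fin_three]
lemma e23_zero : (e23 (0:F)) = 1 := by simp [e23, Matrix.one_fin_three]
lemma e31_zero : (e31 (0:F)) = 1 := by simp [e31, Matrix.one_fin_three]

lemma e12_mul_cancel (r : F) : e12 r * e12 (-r) = 1 := by rw [e12_mul]; simp [e12_zero]
lemma e23_mul_cancel (r : F) : e23 r * e23 (-r) = 1 := by rw [e23_mul]; simp [e23_zero]
lemma e31_mul_cancel (r : F) : e31 r * e31 (-r) = 1 := by rw [e31_mul]; simp [e31_zero]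

def u12 (r : F) : (Matrix (Fin 3) (Fin 3) F)ˣ :=
  ⟨e12 r, e12 (-r), e12_mul_cancel r, by have := e12_mul_cancel (-r); rwa [neg_neg] at this⟩
def u23 (r : F) : (Matrix (Fin 3) (Fin 3) F)ˣ :=
  ⟨e23 r, e23 (-r), e23_mul_cancel r, by have := e23_mul_cancel (-r); rwa [neg_neg] at this⟩
def u31 (r : F) : (Matrix (Fin 3) (Fin 3) F)ˣ :=
  ⟨e31 r, e31 (-r), e31_mul_cancel r, by have := e31_mul_cancel (-r); rwa [neg_neg] at this⟩

@[simp] lemma val_u12 (r : F) : (u12 r).val = e12 r := rfl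
@[simp] lemma inv_u12 (r : F) : ((u12 r)⁻¹).val = e12 (-r) := rfl
@[simp] lemma val_u23 (r : F) : (u23 r).val = e23 r := rfl
@[simp] lemma inv_u23 (r : F) : ((u23 r)⁻¹).val = e23 (-r) := rfl
@[simp] lemma val_u31 (r : F) : (u31 r).val = e31 r := rfl
@[simp] lemma inv_u31 (r : F) : ((u31 r)⁻¹).val = e31 (-r) := rfl

lemma u12_pow (r : F) (n : ℕ) : (u12 r) ^ n = u12 (n * r) := by
  induction n with
  | zero => ext; simp [e12_zero]
  | succ m ih => ext; rw [pow_succ, ih]; simp only [Units.val_mul, val_u12, e12_mul]; norm_num; ring_nf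
lemma u23_pow (r : F) (n : ℕ) : (u23 r) ^ n = u23 (n * r) := by
  induction n with
  | zero => ext; simp [e23_zero]
  | succ m ih => ext; rw [pow_succ, ih]; simp only [Units.val_mul, val_u23, e23_mul]; norm_num; ring_nf
lemma u31_pow (r : F) (n : ℕ) : (u31 r) ^ n = u31 (n * r) := by
  induction n with
  | zero => ext; simp [e31_zero]
  | succ m ih => ext; rw [pow_succ, ih]; simp only [Units.val_mul, val_u31, e31_mul]; norm_num; ring_nf

-- commutator values
lemma pc_mat_u12_u23 (r s : F) : e12 (-r) * e23 (-s) * e12 r * e23 s = e13 (r*s) := by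
  ext i j; fin_cases i <;> fin_cases j <;>
    simp [e12, e23, e13, Matrix.mul_apply, Fin.sum_univ_three, Matrix.vecHead, Matrix.vecTail] <;> ring

lemma pc_mat_u12_u31 (r s : F) : e12 (-r) * e31 (-s) * e12 r * e31 s = e32 (-(r*s)) := by
  ext i j; fin_cases i <;> fin_cases j <;>
    simp [e12, e31, e32, Matrix.mul_apply, Fin.sum_univ_three, Matrix.vecHead, Matrix.vecTail] <;> ring

lemma pc_mat_u23_u31 (r s : F) : e23 (-r) * e31 (-s) * e23 r * e31 s = e21 (r*s) := by
  ext i j; fin_cases i <;> fin_cases j <;>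
    simp [e23, e31, e21, Matrix.mul_apply, Fin.sum_univ_three, Matrix.vecHead, Matrix.vecTail] <;> ring

-- commutations of commutators with generators
lemma e13_comm_e12 (r s : F) : e13 r * e12 s = e12 s * e13 r := by
  ext i j; fin_cases i <;> fin_cases j <;>
    simp [e12, e13, Matrix.mul_apply, Fin.sum_univ_three, Matrix.vecHead, Matrix.vecTail] <;> ring
lemma e13_comm_e23 (r s : F) : e13 r * e23 s = e23 s * e13 r := by
  ext i j; fin_cases i <;> fin_cases j <;>
    simp [e23, e13, Matrix.mul_apply, Fin.sum_univ_three, Matrix.vecHead, Matrix.vecTail] <;> ring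
lemma e32_comm_e12 (r s : F) : e32 r * e12 s = e12 s * e32 r := by
  ext i j; fin_cases i <;> fin_cases j <;>
    simp [e12, e32, Matrix.mul_apply, Fin.sum_univ_three, Matrix.vecHead, Matrix.vecTail] <;> ring
lemma e32_comm_e31 (r s : F) : e32 r * e31 s = e31 s * e32 r := by
  ext i j; fin_cases i <;> fin_cases j <;>
    simp [e31, e32, Matrix.mul_apply, Fin.sum_univ_three, Matrix.vecHead, Matrix.vecTail] <;> ring
lemma e21_comm_e23 (r s : F) : e21 r * e23 s = e23 s * e21 r := by
  ext i j; fin_cases i <;> fin_cases j <;>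
    simp [e23, e21, Matrix.mul_apply, Fin.sum_univ_three, Matrix.vecHead, Matrix.vecTail] <;> ring
lemma e21_comm_e31 (r s : F) : e21 r * e31 s = e31 s * e21 r := by
  ext i j; fin_cases i <;> fin_cases j <;>
    simp [e31, e21, Matrix.mul_apply, Fin.sum_univ_three, Matrix.vecHead, Matrix.vecTail] <;> ring

-- eigenvector computations
lemma X_eigen {S κ τ : F} (hS : S ≠ 0) (hS2 : 2*S - 1 ≠ 0) (h2 : (2:F) ≠ 0)
    (hκ : κ = -(1/2 : F)) (hτ : τ = 2*(S-1)^3/(S*(2*S-1))) :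
    (e12 (1:F) * e23 1 * e12 κ * e31 τ) *ᵥ ![S*(2*S-1), 2*S*(S-1), 2*(S-1)^2]
      = S • ![S*(2*S-1), 2*S*(S-1), 2*(S-1)^2] := by
  subst hκ hτ
  funext i; fin_cases i <;>
    simp [e12, e23, e31, Matrix.mul_apply, Matrix.mulVec, dotProduct,
      Fin.sum_univ_three, Matrix.vecHead, Matrix.vecTail] <;> field_simp <;> ring

lemma Y_eigen {S κ τ : F} (hS : S ≠ 0) (hS2 : 2*S - 1 ≠ 0) (h2 : (2:F) ≠ 0)
    (hκ : κ = -(1/2 : F)) (hτ : τ = 2*(S-1)^3/(S*(2*S-1))) :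
    (e12 (1:F) * e31 τ * e12 κ * e23 1) *ᵥ ![S*(2*S-1), 2*S*(S-1), 2*(S-1)^2]
      = ((2*S-1)/S) • ![S*(2*S-1), 2*S*(S-1), 2*(S-1)^2] := by
  subst hκ hτ
  funext i; fin_cases i <;>
    simp [e12, e23, e31, Matrix.mul_apply, Matrix.mulVec, dotProduct,
      Fin.sum_univ_three, Matrix.vecHead, Matrix.vecTail] <;> field_simp <;> ring

end Rep



section Indep
variable (p : ℕ) [Fact p.Prime]

local notation "K" => RatFunc (ZMod p)

lemma two_ne_zero_zmod (hpodd : Odd p) : (2 : ZMod p) ≠ 0 := by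
  have hp := Fact.out (p := p.Prime)
  have h2 : ((2:ℕ) : ZMod p) ≠ 0 := by
    rw [Ne, ZMod.natCast_eq_zero_iff]
    intro hdvd
    have hq : p = 2 := (Nat.prime_dvd_prime_iff_eq hp Nat.prime_two).mp hdvd
    rw [hq] at hpodd
    exact (by decide : ¬ Odd 2) hpodd
  simpa using h2

lemma pcast_K : ((p : ℕ) : K) = 0 := by
  have := map_natCast (algebraMap (ZMod p) K) p
  rw [ZMod.natCast_self, map_zero] at this
  exact this.symm

lemma two_ne_zero_K (hpodd : Odd p) : (2 : K) ≠ 0 := by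
  intro h0
  apply two_ne_zero_zmod p hpodd
  have h1 : algebraMap (ZMod p) K 2 = 0 := by rwa [map_ofNat]
  exact (algebraMap (ZMod p) K).injective (h1.trans (map_zero _).symm)

lemma S_ne_zero : (RatFunc.X : K) ≠ 0 := RatFunc.X_ne_zero

lemma linpoly_ne_zero : (2 * Polynomial.X - 1 : Polynomial (ZMod p)) ≠ 0 := by
  intro h0
  have h1 := congrArg (Polynomial.eval (0 : ZMod p)) h0
  simp only [Polynomial.eval_sub, Polynomial.eval_mul, Polynomial.eval_ofNat,
    Polynomial.eval_X, Polynomial.eval_one, Polynomial.eval_zero, mul_zero, zero_sub] at h1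
  exact one_ne_zero (neg_eq_zero.mp h1)

lemma linK_eq : (2 * RatFunc.X - 1 : K)
    = algebraMap (Polynomial (ZMod p)) K (2 * Polynomial.X - 1) := by
  rw [map_sub, map_mul, RatFunc.algebraMap_X, map_ofNat, map_one]

lemma lin_ne_zero : (2 * RatFunc.X - 1 : K) ≠ 0 := by
  rw [linK_eq]
  exact RatFunc.algebraMap_ne_zero (linpoly_ne_zero p)

noncomputable def degHom : Kˣ →* Multiplicative ℤ :=
  MonoidHom.mk' (fun u => Multiplicative.ofAdd (RatFunc.intDegree u.val))
    (fun u v => by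
      have := RatFunc.intDegree_mul (u.ne_zero) (v.ne_zero)
      simp only [Units.val_mul] at *
      rw [this, ofAdd_add])

lemma natDegree_lin (hpodd : Odd p) :
    (2 * Polynomial.X - 1 : Polynomial (ZMod p)).natDegree = 1 := by
  have h2 := two_ne_zero_zmod p hpodd
  compute_degree!

lemma indep (hpodd : Odd p) (m n : ℤ)
    (h : (Units.mk0 (RatFunc.X : K) (S_ne_zero p)) ^ m
       * (Units.mk0 ((2 * RatFunc.X - 1) / RatFunc.X : K)
           (div_ne_zero (lin_ne_zero p) (S_ne_zero p))) ^ n = 1) :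
    m = 0 ∧ n = 0 := by
  set su := Units.mk0 (RatFunc.X : K) (S_ne_zero p) with hsu
  set wu := Units.mk0 (2 * RatFunc.X - 1 : K) (lin_ne_zero p) with hwu
  have hμ : (Units.mk0 ((2 * RatFunc.X - 1) / RatFunc.X : K)
      (div_ne_zero (lin_ne_zero p) (S_ne_zero p))) = wu * su⁻¹ := by
    ext; simp [div_eq_mul_inv, hwu, hsu]
  rw [hμ] at h
  have hcomm : su ^ (m - n) * wu ^ n = 1 := by
    rw [← h, mul_zpow, inv_zpow, zpow_sub]
    rw [mul_comm (wu ^ n) ((su ^ n)⁻¹)]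
    rw [mul_assoc]
  have hdeg := congrArg (degHom p) hcomm
  rw [map_mul, map_zpow, map_zpow, map_one] at hdeg
  have hds : degHom p su = Multiplicative.ofAdd (1 : ℤ) := by
    simp [degHom, MonoidHom.mk'_apply, hsu, RatFunc.intDegree_X]
  have hdw : degHom p wu = Multiplicative.ofAdd (1 : ℤ) := by
    have hh : RatFunc.intDegree (2 * RatFunc.X - 1 : K) = 1 := by
      rw [linK_eq, RatFunc.intDegree_polynomial, natDegree_lin p hpodd]
      simp
    simp [degHom, MonoidHom.mk'_apply, hwu, hh]
  rw [hds, hdw] at hdeg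
  have hm : m = 0 := by
    have h9 := congrArg Multiplicative.toAdd hdeg
    simp only [toAdd_mul, toAdd_zpow, toAdd_ofAdd, toAdd_one, smul_eq_mul, mul_one] at h9
    omega
  refine ⟨hm, ?_⟩
  subst hm
  simp only [zero_sub] at hcomm
  have hq : (wu * su⁻¹) ^ n = 1 := by
    rw [mul_zpow, inv_zpow, ← zpow_neg, mul_comm]; exact hcomm
  by_contra hn
  have hN : (wu * su⁻¹) ^ (n.natAbs) = 1 := by
    rcases Int.natAbs_eq n with he | he
    · rw [← zpow_natCast, ← he, hq]
    · rw [← zpow_natCast, ← neg_neg (n.natAbs : ℤ), zpow_neg, ← he, hq, inv_one]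
  have hN0 : n.natAbs ≠ 0 := by omega
  have hval : ((2 * RatFunc.X - 1 : K) * (RatFunc.X : K)⁻¹) ^ (n.natAbs) = 1 := by
    have h8 := congrArg Units.val hN
    simpa [hwu, hsu] using h8
  have hpoly : ((2 * RatFunc.X - 1 : K)) ^ (n.natAbs) = (RatFunc.X : K) ^ (n.natAbs) := by
    rw [mul_pow, inv_pow] at hval
    have hXn : (RatFunc.X : K) ^ n.natAbs ≠ 0 := pow_ne_zero _ (S_ne_zero p)
    field_simp at hval
    exact hval
  have hpoly2 : (2 * Polynomial.X - 1 : Polynomial (ZMod p)) ^ n.natAbs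
      = (Polynomial.X : Polynomial (ZMod p)) ^ n.natAbs := by
    apply RatFunc.algebraMap_injective (ZMod p)
    rw [map_pow, map_pow, ← linK_eq, ← RatFunc.algebraMap_X]
    exact hpoly
  have h7 := congrArg (Polynomial.eval (0 : ZMod p)) hpoly2
  simp only [Polynomial.eval_pow, Polynomial.eval_sub, Polynomial.eval_mul,
    Polynomial.eval_ofNat, Polynomial.eval_X, Polynomial.eval_one, mul_zero, zero_sub] at h7
  rw [zero_pow hN0] at h7
  exact pow_ne_zero _ (neg_ne_zero.mpr one_ne_zero) h7

end Indep

section EigenZpow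
variable {F : Type*} [Field F] {d : ℕ}
open Matrix

lemma unit_eigen_nat (U : (Matrix (Fin d) (Fin d) F)ˣ) (c : F)
    (v : Fin d → F) (h : U.val *ᵥ v = c • v) (k : ℕ) : (U ^ k).val *ᵥ v = c ^ k • v := by
  induction k with
  | zero => simp [Matrix.one_mulVec]
  | succ m ih =>
    rw [pow_succ', Units.val_mul, ← Matrix.mulVec_mulVec, ih, Matrix.mulVec_smul, h,
      smul_smul, pow_succ', mul_comm c (c ^ m)]

lemma unit_eigen_inv (U : (Matrix (Fin d) (Fin d) F)ˣ) (c : Fˣ)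
    (v : Fin d → F) (h : U.val *ᵥ v = (c : F) • v) :
    (U⁻¹).val *ᵥ v = ((c⁻¹ : Fˣ) : F) • v := by
  have h1 : (U⁻¹).val *ᵥ (U.val *ᵥ v) = v := by
    rw [Matrix.mulVec_mulVec, ← Units.val_mul, inv_mul_cancel, Units.val_one,
      Matrix.one_mulVec]
  rw [h, Matrix.mulVec_smul] at h1
  have h2 := congrArg (fun w => ((c⁻¹ : Fˣ) : F) • w) h1
  simp only [smul_smul] at h2
  rw [← Units.val_mul, inv_mul_cancel, Units.val_one, one_smul] at h2
  exact h2

lemma unit_eigen_zpow (U : (Matrix (Fin d) (Fin d) F)ˣ) (c : Fˣ)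
    (v : Fin d → F) (h : U.val *ᵥ v = (c : F) • v) (m : ℤ) :
    (U ^ m).val *ᵥ v = ((c ^ m : Fˣ) : F) • v := by
  cases m with
  | ofNat k =>
    rw [Int.ofNat_eq_coe, zpow_natCast, zpow_natCast]
    have := unit_eigen_nat U (c : F) v h k
    simpa [Units.val_pow_eq_pow_val] using this
  | negSucc k =>
    rw [zpow_negSucc, zpow_negSucc]
    refine unit_eigen_inv (U ^ (k+1)) (c ^ (k+1)) v ?_
    have := unit_eigen_nat U (c : F) v h (k+1)
    simpa [Units.val_pow_eq_pow_val] using this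

end EigenZpow

section URels
variable {F : Type*} [Field F]

lemma u12_zero : u12 (0 : F) = 1 := Units.ext (by simp [e12_zero])
lemma u23_zero : u23 (0 : F) = 1 := Units.ext (by simp [e23_zero])
lemma u31_zero : u31 (0 : F) = 1 := Units.ext (by simp [e31_zero])

lemma val_pc_u12_u23 (r s : F) : (pc (u12 r) (u23 s)).val = e13 (r*s) := by
  simp only [pc, Units.val_mul, inv_u12, inv_u23, val_u12, val_u23]
  exact pc_mat_u12_u23 r s

lemma val_pc_u12_u31 (r s : F) : (pc (u12 r) (u31 s)).val = e32 (-(r*s)) := by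
  simp only [pc, Units.val_mul, inv_u12, inv_u31, val_u12, val_u31]
  exact pc_mat_u12_u31 r s

lemma val_pc_u23_u31 (r s : F) : (pc (u23 r) (u31 s)).val = e21 (r*s) := by
  simp only [pc, Units.val_mul, inv_u23, inv_u31, val_u23, val_u31]
  exact pc_mat_u23_u31 r s

lemma rel_ab_a (r s : F) : pc (pc (u12 r) (u23 s)) (u12 r) = 1 :=
  pc_eq_one_of_comm (Units.ext (by
    rw [Units.val_mul, Units.val_mul, val_pc_u12_u23, val_u12]
    exact e13_comm_e12 (r*s) r))

lemma rel_ab_b (r s : F) : pc (pc (u12 r) (u23 s)) (u23 s) = 1 :=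
  pc_eq_one_of_comm (Units.ext (by
    rw [Units.val_mul, Units.val_mul, val_pc_u12_u23, val_u23]
    exact e13_comm_e23 (r*s) s))

lemma rel_ac_a (r s : F) : pc (pc (u12 r) (u31 s)) (u12 r) = 1 :=
  pc_eq_one_of_comm (Units.ext (by
    rw [Units.val_mul, Units.val_mul, val_pc_u12_u31, val_u12]
    exact e32_comm_e12 (-(r*s)) r))

lemma rel_ac_c (r s : F) : pc (pc (u12 r) (u31 s)) (u31 s) = 1 :=
  pc_eq_one_of_comm (Units.ext (by
    rw [Units.val_mul, Units.val_mul, val_pc_u12_u31, val_u31]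
    exact e32_comm_e31 (-(r*s)) s))

lemma rel_bc_b (r s : F) : pc (pc (u23 r) (u31 s)) (u23 r) = 1 :=
  pc_eq_one_of_comm (Units.ext (by
    rw [Units.val_mul, Units.val_mul, val_pc_u23_u31, val_u23]
    exact e21_comm_e23 (r*s) r))

lemma rel_bc_c (r s : F) : pc (pc (u23 r) (u31 s)) (u31 s) = 1 :=
  pc_eq_one_of_comm (Units.ext (by
    rw [Units.val_mul, Units.val_mul, val_pc_u23_u31, val_u31]
    exact e21_comm_e31 (r*s) s))

end URels

section Spec
variable (p : ℕ) [Fact p.Prime]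

local notation "K" => RatFunc (ZMod p)

noncomputable def tauK : K := 2*(RatFunc.X-1)^3/(RatFunc.X*(2*RatFunc.X-1))

noncomputable def fgen : Fin 3 → (Matrix (Fin 3) (Fin 3) K)ˣ :=
  ![u12 1, u23 1, u31 (tauK p)]

lemma rels_check : ∀ r ∈ kmsA2Rels p, FreeGroup.lift (fgen p) r = 1 := by
  intro r hr
  simp only [kmsA2Rels, Set.mem_insert_iff, Set.mem_singleton_iff] at hr
  have h0 : fgen p 0 = u12 1 := rfl
  have h1 : fgen p 1 = u23 1 := rfl
  have h2 : fgen p 2 = u31 (tauK p) := rfl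
  rcases hr with rfl|rfl|rfl|rfl|rfl|rfl|rfl|rfl|rfl
  · rw [map_pow, FreeGroup.lift_apply_of, h0, u12_pow, pcast_K, zero_mul, u12_zero]
  · rw [map_pow, FreeGroup.lift_apply_of, h1, u23_pow, pcast_K, zero_mul, u23_zero]
  · rw [map_pow, FreeGroup.lift_apply_of, h2, u31_pow, pcast_K, zero_mul, u31_zero]
  · rw [map_pc, map_pc, FreeGroup.lift_apply_of, FreeGroup.lift_apply_of, h0, h1]; exact rel_ab_a 1 1
  · rw [map_pc, map_pc, FreeGroup.lift_apply_of, FreeGroup.lift_apply_of, h0, h1]; exact rel_ab_b 1 1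
  · rw [map_pc, map_pc, FreeGroup.lift_apply_of, FreeGroup.lift_apply_of, h1, h2]; exact rel_bc_b 1 _
  · rw [map_pc, map_pc, FreeGroup.lift_apply_of, FreeGroup.lift_apply_of, h1, h2]; exact rel_bc_c 1 _
  · rw [map_pc, map_pc, FreeGroup.lift_apply_of, FreeGroup.lift_apply_of, h0, h2]; exact rel_ac_a 1 _
  · rw [map_pc, map_pc, FreeGroup.lift_apply_of, FreeGroup.lift_apply_of, h0, h2]; exact rel_ac_c 1 _

noncomputable def phi : KMSA2 p →* (Matrix (Fin 3) (Fin 3) K)ˣ :=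
  PresentedGroup.toGroup (rels_check p)

end Spec

set_option maxHeartbeats 1000000
set_option synthInstance.maxHeartbeats 400000

section Main
open Matrix
variable (p : ℕ) [Fact p.Prime]

local notation "K" => RatFunc (ZMod p)

lemma rel_in_G : ∀ r ∈ kmsA2Rels p, PresentedGroup.mk (kmsA2Rels p) r = 1 :=
  fun _ hr => (QuotientGroup.eq_one_iff _).mpr (Subgroup.subset_normalClosure hr)

noncomputable def AA : KMSA2 p := PresentedGroup.of 0
noncomputable def BB : KMSA2 p := PresentedGroup.of 1
noncomputable def CC : KMSA2 p := PresentedGroup.of 2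

lemma haP : (AA p) ^ p = 1 := by
  have hmem : (FreeGroup.of (0 : Fin 3)) ^ p ∈ kmsA2Rels p := by simp [kmsA2Rels]
  have h := rel_in_G p _ hmem
  rwa [map_pow] at h

lemma hbP : (BB p) ^ p = 1 := by
  have hmem : (FreeGroup.of (1 : Fin 3)) ^ p ∈ kmsA2Rels p := by simp [kmsA2Rels]
  have h := rel_in_G p _ hmem
  rwa [map_pow] at h

lemma hcP : (CC p) ^ p = 1 := by
  have hmem : (FreeGroup.of (2 : Fin 3)) ^ p ∈ kmsA2Rels p := by simp [kmsA2Rels]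
  have h := rel_in_G p _ hmem
  rwa [map_pow] at h

lemma hab_a : pc (pc (AA p) (BB p)) (AA p) = 1 := by
  have hmem : pc (pc (FreeGroup.of (0:Fin 3)) (FreeGroup.of 1)) (FreeGroup.of 0) ∈ kmsA2Rels p := by
    simp [kmsA2Rels]
  have h := rel_in_G p _ hmem
  rwa [map_pc, map_pc] at h

lemma hab_b : pc (pc (AA p) (BB p)) (BB p) = 1 := by
  have hmem : pc (pc (FreeGroup.of (0:Fin 3)) (FreeGroup.of 1)) (FreeGroup.of 1) ∈ kmsA2Rels p := by
    simp [kmsA2Rels]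
  have h := rel_in_G p _ hmem
  rwa [map_pc, map_pc] at h

lemma hbc_b : pc (pc (BB p) (CC p)) (BB p) = 1 := by
  have hmem : pc (pc (FreeGroup.of (1:Fin 3)) (FreeGroup.of 2)) (FreeGroup.of 1) ∈ kmsA2Rels p := by
    simp [kmsA2Rels]
  have h := rel_in_G p _ hmem
  rwa [map_pc, map_pc] at h

lemma hbc_c : pc (pc (BB p) (CC p)) (CC p) = 1 := by
  have hmem : pc (pc (FreeGroup.of (1:Fin 3)) (FreeGroup.of 2)) (FreeGroup.of 2) ∈ kmsA2Rels p := by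
    simp [kmsA2Rels]
  have h := rel_in_G p _ hmem
  rwa [map_pc, map_pc] at h

lemma hac_a : pc (pc (AA p) (CC p)) (AA p) = 1 := by
  have hmem : pc (pc (FreeGroup.of (0:Fin 3)) (FreeGroup.of 2)) (FreeGroup.of 0) ∈ kmsA2Rels p := by
    simp [kmsA2Rels]
  have h := rel_in_G p _ hmem
  rwa [map_pc, map_pc] at h

lemma hac_c : pc (pc (AA p) (CC p)) (CC p) = 1 := by
  have hmem : pc (pc (FreeGroup.of (0:Fin 3)) (FreeGroup.of 2)) (FreeGroup.of 2) ∈ kmsA2Rels p := by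
    simp [kmsA2Rels]
  have h := rel_in_G p _ hmem
  rwa [map_pc, map_pc] at h

noncomputable def Xel : KMSA2 p := AA p * BB p * (AA p) ^ ((p - 1) / 2) * CC p
noncomputable def Yel : KMSA2 p := AA p * CC p * (AA p) ^ ((p - 1) / 2) * BB p

lemma commXY (hodd : Odd p) : Commute (Xel p) (Yel p) := by
  obtain ⟨j, hj⟩ := hodd
  have hpk : p = 2 * ((p - 1) / 2) + 1 := by omega
  exact xy_comm p ((p-1)/2) hpk (haP p) (hbP p) (hcP p)
    (hab_a p) (hab_b p) (hbc_b p) (hbc_c p) (hac_a p) (hac_c p)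

-- the image of Xel and Yel under phi
lemma phi_AA : phi p (AA p) = u12 1 := PresentedGroup.toGroup.of _
lemma phi_BB : phi p (BB p) = u23 1 := PresentedGroup.toGroup.of _
lemma phi_CC : phi p (CC p) = u31 (tauK p) := PresentedGroup.toGroup.of _

lemma kappa_eq (hodd : Odd p) : ((((p-1)/2 : ℕ)) : K) = -(1/2 : K) := by
  have h2K : (2 : K) ≠ 0 := two_ne_zero_K p hodd
  have hp1 : 1 ≤ p := (Fact.out (p := p.Prime)).one_lt.le.trans' (by omega)
  have hk2 : (2 * ((p-1)/2) : ℕ) = p - 1 := by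
    obtain ⟨j, hj⟩ := hodd; omega
  have hcast : ((2 * ((p-1)/2) : ℕ) : K) = -1 := by
    rw [hk2, Nat.cast_sub hp1, pcast_K, Nat.cast_one, zero_sub]
  push_cast at hcast
  apply mul_left_cancel₀ h2K
  rw [hcast, mul_neg, mul_one_div, div_self h2K]

noncomputable def vec : Fin 3 → K :=
  ![RatFunc.X*(2*RatFunc.X-1), 2*RatFunc.X*(RatFunc.X-1), 2*(RatFunc.X-1)^2]

lemma phi_X_eigen (hodd : Odd p) :
    (phi p (Xel p)).val *ᵥ vec p = (RatFunc.X : K) • vec p := by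
  have hφX : phi p (Xel p)
      = u12 1 * u23 1 * u12 ((((p-1)/2 : ℕ)) : K) * u31 (tauK p) := by
    rw [Xel, _root_.map_mul, _root_.map_mul, _root_.map_mul, _root_.map_pow, phi_AA, phi_BB, phi_CC, u12_pow, mul_one]
  rw [hφX]
  simp only [Units.val_mul, val_u12, val_u23, val_u31]
  exact X_eigen (S_ne_zero p) (lin_ne_zero p) (two_ne_zero_K p hodd) (kappa_eq p hodd) rfl

lemma phi_Y_eigen (hodd : Odd p) :
    (phi p (Yel p)).val *ᵥ vec p = ((2*RatFunc.X-1)/RatFunc.X : K) • vec p := by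
  have hφY : phi p (Yel p)
      = u12 1 * u31 (tauK p) * u12 ((((p-1)/2 : ℕ)) : K) * u23 1 := by
    rw [Yel, _root_.map_mul, _root_.map_mul, _root_.map_mul, _root_.map_pow, phi_AA, phi_BB, phi_CC, u12_pow, mul_one]
  rw [hφY]
  simp only [Units.val_mul, val_u12, val_u23, val_u31]
  exact Y_eigen (S_ne_zero p) (lin_ne_zero p) (two_ne_zero_K p hodd) (kappa_eq p hodd) rfl

lemma key (hodd : Odd p) (m n : ℤ) (h : (Xel p) ^ m * (Yel p) ^ n = 1) :
    m = 0 ∧ n = 0 := by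
  set su := Units.mk0 (RatFunc.X : K) (S_ne_zero p) with hsu
  set μu := Units.mk0 ((2 * RatFunc.X - 1) / RatFunc.X : K)
      (div_ne_zero (lin_ne_zero p) (S_ne_zero p)) with hμu
  have h1 := congrArg (phi p) h
  rw [_root_.map_mul, _root_.map_zpow, _root_.map_zpow, _root_.map_one] at h1
  have h2 := congrArg (fun (u : (Matrix (Fin 3) (Fin 3) K)ˣ) => u.val *ᵥ vec p) h1
  simp only [Units.val_mul, Units.val_one, Matrix.one_mulVec] at h2
  rw [← Matrix.mulVec_mulVec,
    unit_eigen_zpow (phi p (Yel p)) μu (vec p) (phi_Y_eigen p hodd) n,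
    Matrix.mulVec_smul,
    unit_eigen_zpow (phi p (Xel p)) su (vec p) (phi_X_eigen p hodd) m,
    smul_smul] at h2
  have hv0 : vec p 0 ≠ 0 := by
    show (vec p) 0 ≠ 0
    exact mul_ne_zero (S_ne_zero p) (lin_ne_zero p)
  have h3 := congrFun h2 0
  simp only [Pi.smul_apply, smul_eq_mul] at h3
  have h4 : ((μu ^ n : Kˣ) : K) * ((su ^ m : Kˣ) : K) = 1 := by
    have := mul_right_cancel₀ hv0 (h3.trans (one_mul (vec p 0)).symm)
    exact this
  have h5 : su ^ m * μu ^ n = 1 := by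
    apply Units.ext
    rw [Units.val_mul]
    rw [mul_comm]
    simpa using h4
  exact indep p hodd m n h5

noncomputable def psi (hodd : Odd p) : Multiplicative (ℤ × ℤ) →* KMSA2 p :=
  MonoidHom.mk' (fun g => (Xel p) ^ (g.toAdd).1 * (Yel p) ^ (g.toAdd).2)
    (by
      intro g h
      have hc := commXY p hodd
      have hc' : (Yel p) ^ (g.toAdd).2 * (Xel p) ^ (h.toAdd).1
          = (Xel p) ^ (h.toAdd).1 * (Yel p) ^ (g.toAdd).2 :=
        (hc.symm.zpow_zpow _ _).eq
      simp only [toAdd_mul, Prod.fst_add, Prod.snd_add, _root_.zpow_add]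
      calc (Xel p) ^ (g.toAdd).1 * (Xel p) ^ (h.toAdd).1
            * ((Yel p) ^ (g.toAdd).2 * (Yel p) ^ (h.toAdd).2)
          = (Xel p) ^ (g.toAdd).1
            * ((Xel p) ^ (h.toAdd).1 * (Yel p) ^ (g.toAdd).2) * (Yel p) ^ (h.toAdd).2 := by
            group
        _ = (Xel p) ^ (g.toAdd).1
            * ((Yel p) ^ (g.toAdd).2 * (Xel p) ^ (h.toAdd).1) * (Yel p) ^ (h.toAdd).2 := by
            rw [hc']
        _ = (Xel p) ^ (g.toAdd).1 * (Yel p) ^ (g.toAdd).2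
            * ((Xel p) ^ (h.toAdd).1 * (Yel p) ^ (h.toAdd).2) := by group)

lemma psi_apply (hodd : Odd p) (g : Multiplicative (ℤ × ℤ)) :
    psi p hodd g = (Xel p) ^ (g.toAdd).1 * (Yel p) ^ (g.toAdd).2 := rfl

lemma psi_injective (hodd : Odd p) : Function.Injective (psi p hodd) := by
  rw [injective_iff_map_eq_one]
  intro g hg
  rw [psi_apply] at hg
  obtain ⟨hm, hn⟩ := key p hodd _ _ hg
  have h0 : g.toAdd = 0 := Prod.ext hm hn
  rw [← ofAdd_toAdd g, h0, ofAdd_zero]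

lemma psi_range (hodd : Odd p) :
    (psi p hodd).range = Subgroup.closure {Xel p, Yel p} := by
  apply le_antisymm
  · rintro w ⟨g, rfl⟩
    rw [psi_apply]
    have hX : Xel p ∈ Subgroup.closure {Xel p, Yel p} :=
      Subgroup.subset_closure (Set.mem_insert _ _)
    have hY : Yel p ∈ Subgroup.closure {Xel p, Yel p} :=
      Subgroup.subset_closure (Set.mem_insert_of_mem _ rfl)
    exact Subgroup.mul_mem _ (Subgroup.zpow_mem _ hX _) (Subgroup.zpow_mem _ hY _)
  · rw [Subgroup.closure_le]
    intro w hw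
    rcases hw with rfl | hw
    · exact ⟨Multiplicative.ofAdd (1, 0), by
        rw [psi_apply]; simp⟩
    · rcases hw with rfl
      exact ⟨Multiplicative.ofAdd (0, 1), by
        rw [psi_apply]; simp⟩

end Main


/-- For an odd prime p, in G = 𝒢_{Ã₂}(p) the elements x = a·b·a^((p−1)/2)·c and
y = a·c·a^((p−1)/2)·b generate a subgroup isomorphic to ℤ × ℤ. -/
theorem kmsA2_contains_Z2 (p : ℕ) (hp : p.Prime) (hodd : Odd p) :
    letI a : KMSA2 p := PresentedGroup.of 0
    letI b : KMSA2 p := PresentedGroup.of 1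
    letI c : KMSA2 p := PresentedGroup.of 2
    Nonempty
      ((Subgroup.closure {a * b * a ^ ((p - 1) / 2) * c, a * c * a ^ ((p - 1) / 2) * b} :
          Subgroup (KMSA2 p)) ≃* Multiplicative (ℤ × ℤ)) := by
  haveI := Fact.mk hp
  show Nonempty ((Subgroup.closure {Xel p, Yel p} : Subgroup (KMSA2 p))
      ≃* Multiplicative (ℤ × ℤ))
  exact ⟨(MulEquiv.subgroupCongr (psi_range p hodd).symm).trans
    (MonoidHom.ofInjective (psi_injective p hodd)).symm⟩
end
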